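/- Composing doctor-proposing Gale–Shapley with strictly individually fair hospital preferences does not guarantee fairness: there exist finite sets D, H with |D| = |H| = 3, a partition of D into clusters, strict doctor preference orders on H, probabilistic hospital preferences (one distribution over strict linear orders on D per hospital, sampled independently across hospitals) each of which is strictly individually fair with respect to the partition, and a function f mapping each preference profile in the support of the product distribution to the doctor-optimal stable matching of that profile, such that the probabilistic allocation obtained as the pushforward of the product distribution under f is not PIIF with respect to the proto-metric induced by the partition. -/

import Mathlib

open Finset

/-- A probabilistic allocation: a finitely supported probability distribution over
matchings (bijections between doctors `D` and hospitals `H`). -/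
def IsAlloc {D H : Type*} [Fintype D] [Fintype H] [DecidableEq D] [DecidableEq H]
    (π : (D ≃ H) → ℝ) : Prop :=
  (∀ m, 0 ≤ π m) ∧ (∑ m : D ≃ H, π m) = 1

/-- The prospect of doctor `i` under the allocation `π`: the probability that `i`
is matched to hospital `h`. -/
def prospect {D H : Type*} [Fintype D] [Fintype H] [DecidableEq D] [DecidableEq H]
    (π : (D ≃ H) → ℝ) (i : D) (h : H) : ℝ :=
  ∑ m : D ≃ H, if m i = h then π m else 0

/-- `p` is a probability distribution on `H`. -/
def IsDist {H : Type*} [Fintype H] (p : H → ℝ) : Prop :=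
  (∀ h, 0 ≤ p h) ∧ (∑ h : H, p h) = 1

/-- Total variation distance between two distributions on `H`. -/
noncomputable def TV {H : Type*} [Fintype H] (p q : H → ℝ) : ℝ :=
  (1 / 2) * ∑ h : H, |p h - q h|

/-- `p` stochastically dominates `q` with respect to the strict preference relation
`pref` (where `pref x y` means `x` is strictly preferred to `y`): for every `h`, the
probability of an outcome at least as good as `h` under `p` is at least that under `q`. -/
def SDom {H : Type*} [Fintype H] (pref : H → H → Prop) (p q : H → ℝ) : Prop :=
  ∀ h : H,
    (∑ h' : H, Set.indicator {x : H | pref x h ∨ x = h} q h') ≤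
      ∑ h' : H, Set.indicator {x : H | pref x h ∨ x = h} p h'

/-- Preference-informed individual fairness with respect to a (pseudo)metric `d`,
total variation distance, and the doctors' strict preferences `pref`. -/
def PIIF {D H : Type*} [Fintype D] [Fintype H] [DecidableEq D] [DecidableEq H]
    (d : D → D → ℝ) (pref : D → H → H → Prop) (π : (D ≃ H) → ℝ) : Prop :=
  ∀ i j : D, ∃ p : H → ℝ,
    IsDist p ∧ TV p (prospect π j) ≤ d i j ∧ SDom (pref i) (prospect π i) p

/-- PIIF with respect to the proto-metric induced by the cluster map `c`: the prospect
of every doctor stochastically dominates the prospect of every doctor in its cluster. -/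
def ClusterPIIF {D H K : Type*} [Fintype D] [Fintype H] [DecidableEq D] [DecidableEq H]
    (c : D → K) (pref : D → H → H → Prop) (π : (D ≃ H) → ℝ) : Prop :=
  ∀ i j : D, c i = c j → SDom (pref i) (prospect π i) (prospect π j)

/-- A probability distribution `q` over strict linear orders on the doctors
(an order is represented by its rank function, a bijection `σ : D ≃ Fin n` where
`σ i < σ j` means `i` is ranked above `j`) is *strictly individually fair* with
respect to the cluster map `c` if (i) any two doctors in the same cluster have the
same rank distribution, and (ii) for any two distinct clusters, with probability 1
one of them is entirely ranked above the other. -/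
def StrictIF {n : ℕ} {D K : Type*} [Fintype D] [DecidableEq D]
    (c : D → K) (q : (D ≃ Fin n) → ℝ) : Prop :=
  (∀ i j : D, c i = c j → ∀ k : Fin n,
      (∑ σ : D ≃ Fin n, if σ i = k then q σ else 0) =
        (∑ σ : D ≃ Fin n, if σ j = k then q σ else 0)) ∧
  (∀ k1 k2 : K, k1 ≠ k2 →
      (∀ σ : D ≃ Fin n, q σ ≠ 0 → ∀ i j : D, c i = k1 → c j = k2 → σ i < σ j) ∨
      (∀ σ : D ≃ Fin n, q σ ≠ 0 → ∀ i j : D, c i = k1 → c j = k2 → σ j < σ i))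

/-- A matching `m` is stable for the profile given by the doctors' strict preferences
`dpref` and the hospitals' strict orders `R` (rank functions over the doctors):
no doctor–hospital pair prefer each other to their partners. -/
def StableFor {n : ℕ} {D H : Type*} (dpref : D → H → H → Prop)
    (R : H → D ≃ Fin n) (m : D ≃ H) : Prop :=
  ¬ ∃ (i : D) (h : H), dpref i h (m i) ∧ R h i < R h (m.symm h)

/-- `m` is the doctor-optimal stable matching for the given profile. -/
def DoctorOptimalStable {n : ℕ} {D H : Type*} (dpref : D → H → H → Prop)
    (R : H → D ≃ Fin n) (m : D ≃ H) : Prop :=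
  StableFor dpref R m ∧
    ∀ m' : D ≃ H, StableFor dpref R m' → ∀ i : D, m i = m' i ∨ dpref i (m i) (m' i)

/-! Doctors 0 and 1 form one cluster, doctor 2 another. Doctors 0 and 1 both rank hospital 2
first; hospital 2 ranks doctor 2 first, and hospitals 0 and 1 rank doctor 2 last. Under deferred
acceptance, if hospital 2 prefers doctor 0 to doctor 1, doctor 0 gets hospital 2 and doctor 1
falls back to hospital 1. If it prefers doctor 1, the rejected doctor 0 displaces doctor 2 at
hospital 0, doctor 2 then displaces doctor 1 at hospital 2, and doctor 1 again ends at hospital 1.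
So doctor 1 never obtains their top choice, which doctor 0 obtains with probability 1/2. -/

section General

variable {D H Ω : Type*} [Fintype D] [Fintype H] [DecidableEq D] [DecidableEq H] [Fintype Ω]

theorem prospect_pushforward (f : Ω → D ≃ H) (w : Ω → ℝ) (i : D) (h : H) :
    prospect (fun m => ∑ ω, if f ω = m then w ω else 0) i h =
      ∑ ω, if f ω i = h then w ω else 0 := by
  simp only [prospect, Finset.ite_sum_zero]
  rw [Finset.sum_comm]
  refine Finset.sum_congr rfl fun ω _ => ?_
  rw [Finset.sum_eq_single (f ω)] <;> aesop

theorem SDom.le_apply_of_forall_not_pref {pref : H → H → Prop} {p q : H → ℝ}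
    (hpq : SDom pref p q) {h : H} (htop : ∀ x, ¬ pref x h) : q h ≤ p h := by
  have hset : {x : H | pref x h ∨ x = h} = {h} := by
    ext x
    simp [htop x]
  simpa [hset, Set.indicator_apply] using hpq h

end General

section UniformPair

variable {α : Type*} [DecidableEq α]

noncomputable def uniformPair (a b x : α) : ℝ :=
  if x = a ∨ x = b then 1 / 2 else 0

theorem uniformPair_nonneg (a b x : α) : 0 ≤ uniformPair a b x := by
  unfold uniformPair
  split_ifs <;> norm_num

theorem uniformPair_left (a b : α) : uniformPair a b a = 1 / 2 := by
  simp [uniformPair]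

theorem eq_or_eq_of_uniformPair_ne_zero {a b x : α} (hx : uniformPair a b x ≠ 0) :
    x = a ∨ x = b := by
  by_contra hab
  exact hx (if_neg hab)

theorem isDist_uniformPair [Fintype α] {a b : α} (hab : a ≠ b) : IsDist (uniformPair a b) := by
  refine ⟨uniformPair_nonneg a b, ?_⟩
  simp only [uniformPair, ← Finset.sum_filter, Finset.sum_const, nsmul_eq_mul]
  rw [Finset.filter_or, Finset.filter_eq', Finset.filter_eq',
    Finset.card_union_of_disjoint (by simpa using hab)]
  norm_num

end UniformPair

theorem rankDist_eq_of_swap_invariant {n : ℕ} {D : Type*} [Fintype D] [DecidableEq D]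
    (q : (D ≃ Fin n) → ℝ) (i j : D) (hq : ∀ σ, q ((Equiv.swap i j).trans σ) = q σ)
    (k : Fin n) :
    (∑ σ : D ≃ Fin n, if σ i = k then q σ else 0) =
      ∑ σ : D ≃ Fin n, if σ j = k then q σ else 0 :=
  Fintype.sum_equiv ((Equiv.swap i j).equivCongr (Equiv.refl _)) _ _ fun σ => by
    have hσ : (Equiv.swap i j).equivCongr (Equiv.refl _) σ = (Equiv.swap i j).trans σ := by
      ext; simp [Equiv.equivCongr_apply_apply]
    simp [hσ, hq]

theorem uniformPair_swap_trans {n : ℕ} {D : Type*} [Fintype D] [DecidableEq D]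
    (i j : D) (σ τ : D ≃ Fin n) :
    uniformPair σ ((Equiv.swap i j).trans σ) ((Equiv.swap i j).trans τ) =
      uniformPair σ ((Equiv.swap i j).trans σ) τ := by
  set s := (Equiv.swap i j).trans (γ := Fin n)
  have hs : ∀ τ, s (s τ) = τ := fun τ => by ext; simp [s]
  have hleft : s τ = σ ↔ τ = s σ := ⟨fun h => h ▸ (hs τ).symm, fun h => h ▸ hs σ⟩
  have hright : s τ = s σ ↔ τ = σ := ⟨fun h => by simpa [hs] using congrArg s h, congrArg s⟩
  simp only [uniformPair, hleft, hright, or_comm]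

namespace GaleShapleyCounterexample

def cluster : Fin 3 → Fin 2 := ![0, 0, 1]

def doctorRank : Fin 3 → Fin 3 ≃ Fin 3 := ![finRotate 3, Equiv.swap 0 2, Equiv.swap 1 2]

abbrev doctorPref (i h₁ h₂ : Fin 3) : Prop := doctorRank i h₁ < doctorRank i h₂

def baseRank (h : Fin 3) : Fin 3 ≃ Fin 3 := if h = 2 then finRotate 3 else Equiv.refl _

noncomputable def hospitalPref (h : Fin 3) : (Fin 3 ≃ Fin 3) → ℝ :=
  uniformPair (baseRank h) ((Equiv.swap 0 1).trans (baseRank h))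

def matching (R : Fin 3 → Fin 3 ≃ Fin 3) : Fin 3 ≃ Fin 3 :=
  if R 2 = finRotate 3 then Equiv.swap 0 2 else Equiv.refl _

theorem isDist_hospitalPref (h : Fin 3) : IsDist (hospitalPref h) :=
  isDist_uniformPair (by fin_cases h <;> decide)

theorem strictIF_hospitalPref (h : Fin 3) : StrictIF cluster (hospitalPref h) := by
  have hswap : ∀ k, (∑ σ : Fin 3 ≃ Fin 3, if σ 0 = k then hospitalPref h σ else 0) =
      ∑ σ : Fin 3 ≃ Fin 3, if σ 1 = k then hospitalPref h σ else 0 :=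
    rankDist_eq_of_swap_invariant _ 0 1 (uniformPair_swap_trans 0 1 _)
  refine ⟨fun i j hij k => ?_, fun k₁ k₂ hk => ?_⟩
  · fin_cases i <;> fin_cases j <;> first
      | rfl
      | exact absurd hij (by decide)
      | exact hswap k
      | exact (hswap k).symm
  · fin_cases k₁ <;> fin_cases k₂ <;> first
      | exact absurd rfl hk
      | fin_cases h <;> first
          | (left; intro σ hσ
             rcases eq_or_eq_of_uniformPair_ne_zero hσ with rfl | rfl <;> decide)
          | (right; intro σ hσ
             rcases eq_or_eq_of_uniformPair_ne_zero hσ with rfl | rfl <;> decide)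

theorem doctorOptimalStable_matching (R : Fin 3 → Fin 3 ≃ Fin 3)
    (hR : ∏ h, hospitalPref h (R h) ≠ 0) : DoctorOptimalStable doctorPref R (matching R) := by
  have hsupp (h : Fin 3) : R h = baseRank h ∨ R h = (Equiv.swap 0 1).trans (baseRank h) :=
    eq_or_eq_of_uniformPair_ne_zero (Finset.prod_ne_zero_iff.mp hR h (Finset.mem_univ h))
  have hR_eq : R = ![R 0, R 1, R 2] := by
    ext x : 1
    fin_cases x <;> rfl
  rw [hR_eq]
  rcases hsupp 0 with h₀ | h₀ <;> rcases hsupp 1 with h₁ | h₁ <;> rcases hsupp 2 with h₂ | h₂ <;>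
    rw [h₀, h₁, h₂] <;> unfold DoctorOptimalStable StableFor <;> decide

theorem matching_apply_one (R : Fin 3 → Fin 3 ≃ Fin 3) : matching R 1 = 1 := by
  unfold matching
  split_ifs <;> rfl

theorem not_clusterPIIF :
    ¬ ClusterPIIF cluster doctorPref
      (fun m => ∑ R, if matching R = m then ∏ h, hospitalPref h (R h) else 0) := by
  intro hfair
  have henvy := (hfair 1 0 rfl).le_apply_of_forall_not_pref (h := 2) (by decide)
  have hne : (1 : Fin 3) ≠ 2 := by decide
  simp only [prospect_pushforward, matching_apply_one, hne, if_false, Finset.sum_const_zero]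
    at henvy
  refine henvy.not_gt (Finset.sum_pos' (fun R _ => ?_) ⟨baseRank, Finset.mem_univ _, ?_⟩)
  · split_ifs
    exacts [Finset.prod_nonneg fun h _ => uniformPair_nonneg _ _ _, le_rfl]
  · rw [if_pos (by decide)]
    exact Finset.prod_pos fun h _ => by simp only [hospitalPref, uniformPair_left]; norm_num

end GaleShapleyCounterexample

theorem doctor_propose_gale_shapley_composition_fails :
    ∃ (c : Fin 3 → Fin 2) (drk : Fin 3 → Fin 3 ≃ Fin 3)
      (q : Fin 3 → (Fin 3 ≃ Fin 3) → ℝ)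
      (f : (Fin 3 → Fin 3 ≃ Fin 3) → Fin 3 ≃ Fin 3),
      (∀ h : Fin 3, IsDist (q h)) ∧
      (∀ h : Fin 3, StrictIF c (q h)) ∧
      (∀ R : Fin 3 → Fin 3 ≃ Fin 3, (∏ h : Fin 3, q h (R h)) ≠ 0 →
        DoctorOptimalStable (fun i h1 h2 => drk i h1 < drk i h2) R (f R)) ∧
      ¬ ClusterPIIF c (fun i h1 h2 => drk i h1 < drk i h2)
          (fun m : Fin 3 ≃ Fin 3 =>
            ∑ R : Fin 3 → Fin 3 ≃ Fin 3,
              if f R = m then ∏ h : Fin 3, q h (R h) else 0) :=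
  open GaleShapleyCounterexample in
  ⟨cluster, doctorRank, hospitalPref, matching, isDist_hospitalPref, strictIF_hospitalPref,
    doctorOptimalStable_matching, not_clusterPIIF⟩
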